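/- arXiv:1601.02783 — 4 statements merged into one kernel-verified Lean document; each statement's English description precedes it below -/
import Mathlib

section
/- For every t ≠ 0, the point Q_t = (0:1:−1) is a hyperflex of the quartic S_t = {F_t = 0}: the tangent line to S_t at Q_t is the line {X = 0}, and it meets S_t at Q_t with intersection multiplicity 4. Equivalently, restricting F_t to the line X = 0 gives 3t·Y³(Y+Z), and after translating coordinates so that Q_t corresponds to the origin, the restriction of F_t to its tangent line at Q_t vanishes to order 4. -/
noncomputable def KSF (t X Y Z : ℂ) : ℂ :=
  X^4 + t * (X^4 - 3*X^3*Y + 6*X^3*Z - 3*X^2*Y^2 - 6*X^2*Y*Z + 6*X^2*Z^2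
    + 4*X*Y^3 - 6*X*Y^2*Z - 6*X*Y*Z^2 + X*Z^3 + 3*Y^4 + 3*Y^3*Z)

/-- `Q_t = (0:1:−1)` is a hyperflex of `S_t`: restriction of `F_t` to the line `X = 0`
is `3t·Y³(Y+Z)`; `Q_t` is a smooth point of `S_t`; and parametrizing the tangent line
of `S_t` at `Q_t` by `u ↦ (u : 1 : −1−u)` (so that `u = 0` corresponds to `Q_t`), the
restriction of `F_t` to this tangent line vanishes to order exactly 4 at `Q_t`. -/
theorem stmt_6 (t : ℂ) (ht : t ≠ 0) :
    (∀ Y Z : ℂ, KSF t 0 Y Z = 3 * t * Y^3 * (Y + Z)) ∧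
    deriv (fun Z => KSF t 0 1 Z) (-1) = 3 * t ∧
    (∀ u : ℂ, KSF t u 1 (-1 - u) = u^4) := by
  refine ⟨fun Y Z => by unfold KSF; ring, ?_, fun u => by unfold KSF; ring⟩
  have h : (fun Z : ℂ => KSF t 0 1 Z) = fun Z => 3 * t + 3 * t * Z := by
    funext Z; unfold KSF; ring
  rw [h]
  have : HasDerivAt (fun Z : ℂ => 3 * t + 3 * t * Z) (3 * t) (-1) := by
    simpa using ((hasDerivAt_id (-1 : ℂ)).const_mul (3 * t)).const_add (3 * t)
  exact this.deriv
end

section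
/- For every t ≠ 0, the tangent line to the quartic S_t = {F_t = 0} at P_t = (0:0:1) is the line {X = 0}, and it meets S_t at P_t with intersection multiplicity 3 (so P_t is an ordinary flex and {X=0} is a triple tangent at P_t passing through Q_t = (0:1:−1)). -/
/-- The line `{X = 0}` is the tangent line to `S_t` at `P_t = (0:0:1)`, meeting `S_t`
there with multiplicity exactly 3 (an ordinary flex): parametrizing `{X = 0}` near
`P_t` by `u ↦ (0 : u : 1)`, one has `F_t(0,u,1) = 3t·u³(u+1)` with `3t ≠ 0`; moreover
this triple tangent passes through `Q_t = (0:1:−1)`. -/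
theorem stmt_7 (t : ℂ) (ht : t ≠ 0) :
    (∀ Y Z : ℂ, KSF t 0 Y Z = 3 * t * Y^3 * (Y + Z)) ∧
    (∀ u : ℂ, KSF t 0 u 1 = 3 * t * u^3 * (u + 1)) ∧
    3 * t ≠ 0 ∧
    KSF t 0 1 (-1) = 0 := by
  refine ⟨fun Y Z => by unfold KSF; ring, fun u => by unfold KSF; ring, ?_, by unfold KSF; ring⟩
  exact mul_ne_zero (by norm_num) ht
end

section
/- On the curve y⁹ = x²(x−1)³, set u = y/(x(x−1)), v = c·y⁵/(x²(x−1)²) with c³ = ζ₃/3, w = y⁷/(x²(x−1)³), and X = −ζ₃u; then X⁴ + X·w³ + 3·v³·w = 0 as rational functions on the curve, using the relation y⁹ = x²(x−1)³. -/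
/-- On the curve `y⁹ = x²(x−1)³`, setting `u = y/(x(x−1))`, `v′ = y⁵/(x²(x−1)²)`,
`w = y⁷/(x²(x−1)³)`, `X = −ζ₃u`, `c³ = ζ₃/3` (with `ζ₃` a primitive cube root of
unity), one has the quartic relation `X⁴ + X·w³ + 3(cv′)³·w = 0`. -/
theorem stmt_13 (x y ζ c : ℂ) (hx : x ≠ 0) (hx1 : x ≠ 1)
    (hy : y^9 = x^2*(x - 1)^3) (hζ : ζ^2 + ζ + 1 = 0) (hc : c^3 = ζ/3) :
    (-ζ * (y/(x*(x - 1))))^4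
      + (-ζ * (y/(x*(x - 1)))) * (y^7/(x^2*(x - 1)^3))^3
      + 3 * (c * (y^5/(x^2*(x - 1)^2)))^3 * (y^7/(x^2*(x - 1)^3)) = 0 := by
  have hx1' : x - 1 ≠ 0 := sub_ne_zero.mpr hx1
  have hd : (x^15*(x-1)^19 : ℂ) ≠ 0 := mul_ne_zero (pow_ne_zero _ hx) (pow_ne_zero _ hx1')
  set a := y/(x*(x - 1)) with ha0
  set b := y^7/(x^2*(x - 1)^3) with hb0
  set d := y^5/(x^2*(x - 1)^2) with hd0
  have ha : a * (x*(x-1)) = y := div_mul_cancel₀ _ (mul_ne_zero hx hx1')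
  have hb : b * (x^2*(x-1)^3) = y^7 :=
    div_mul_cancel₀ _ (mul_ne_zero (pow_ne_zero _ hx) (pow_ne_zero _ hx1'))
  have hdd : d * (x^2*(x-1)^2) = y^5 :=
    div_mul_cancel₀ _ (mul_ne_zero (pow_ne_zero _ hx) (pow_ne_zero _ hx1'))
  have e1 : a^4 * (x^15*(x-1)^19) = y^4 * (x^11*(x-1)^15) := by
    calc a^4 * (x^15*(x-1)^19) = (a*(x*(x-1)))^4 * (x^11*(x-1)^15) := by ring
    _ = y^4 * (x^11*(x-1)^15) := by rw [ha]
  have e2 : a * b^3 * (x^15*(x-1)^19) = y^22 * (x^8*(x-1)^9) := by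
    calc a * b^3 * (x^15*(x-1)^19)
        = (a*(x*(x-1))) * (b*(x^2*(x-1)^3))^3 * (x^8*(x-1)^9) := by ring
    _ = y * (y^7)^3 * (x^8*(x-1)^9) := by rw [ha, hb]
    _ = y^22 * (x^8*(x-1)^9) := by ring
  have e3 : d^3 * b * (x^15*(x-1)^19) = y^22 * (x^7*(x-1)^10) := by
    calc d^3 * b * (x^15*(x-1)^19)
        = (d*(x^2*(x-1)^2))^3 * (b*(x^2*(x-1)^3)) * (x^7*(x-1)^10) := by ring
    _ = (y^5)^3 * y^7 * (x^7*(x-1)^10) := by rw [hdd, hb]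
    _ = y^22 * (x^7*(x-1)^10) := by ring
  have H : ((-ζ * a)^4 + (-ζ * a) * b^3 + 3 * (c * d)^3 * b) * (x^15*(x-1)^19) = 0 := by
    linear_combination ζ^4 * e1 + (-ζ) * e2 + 3*c^3 * e3
      + ((-ζ * (x^8*(x-1)^9) + 3*c^3 * (x^7*(x-1)^10)) * (y^13 + y^4*x^2*(x-1)^3)) * hy
      + (3 * y^4 * x^11 * (x-1)^16) * hc
      + (y^4 * x^11 * (x-1)^15 * ζ * (ζ-1)) * hζ
  exact (mul_eq_zero.mp H).resolve_right hd
end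

section
/- Let v be a root of v³ − 3v + 1. Set B = (−2v² + 6v + 5)/17, C = (−6v² − 8v + 13)/17, D = (8v² + 2v − 15)/17, and residues r_A = −v² − v + 3, r_B = 1, r_C = v² − 3, r_D = −v² + 2. Then the rational 1-form ω(z) = (r_A/(z−1) − r_A/(z+1) + r_B/(z−B) + r_C/(z−C) + r_D/(z−D))dz on ℙ¹ has a zero of order 3 at z = 0. -/
open Polynomial

/-- The stable differential on the component `T` of the reducible cusp has a zero of
order 3 at `z = 0`: writing
`ω = (r_A/(z−1) − r_A/(z+1) + r_B/(z−B) + r_C/(z−C) + r_D/(z−D)) dz`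
with common denominator `(z−1)(z+1)(z−B)(z−C)(z−D)`, the numerator polynomial `N` is
divisible by `z³` and nonzero (and the denominator does not vanish at `0`, i.e.
`B, C, D ≠ 0`), in the field `K = ℚ[v]/(v³ − 3v + 1)`. -/
theorem stmt_14 (K : Type*) [Field K] [CharZero K] (v : K)
    (hv : v^3 - 3*v + 1 = 0) :
    let Bv : K := (-2*v^2 + 6*v + 5)/17
    let Cv : K := (-6*v^2 - 8*v + 13)/17
    let Dv : K := (8*v^2 + 2*v - 15)/17
    let rA : K := -v^2 - v + 3
    let rB : K := 1
    let rC : K := v^2 - 3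
    let rD : K := -v^2 + 2
    let N : K[X] :=
      C rA * (X + 1) * (X - C Bv) * (X - C Cv) * (X - C Dv)
      - C rA * (X - 1) * (X - C Bv) * (X - C Cv) * (X - C Dv)
      + C rB * (X - 1) * (X + 1) * (X - C Cv) * (X - C Dv)
      + C rC * (X - 1) * (X + 1) * (X - C Bv) * (X - C Dv)
      + C rD * (X - 1) * (X + 1) * (X - C Bv) * (X - C Cv)
    (X^3 ∣ N) ∧ N ≠ 0 ∧ ¬ (X^4 ∣ N) ∧ Bv ≠ 0 ∧ Cv ≠ 0 ∧ Dv ≠ 0 := by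
  intro Bv Cv Dv rA rB rC rD N
  have h17 : (17:K) ≠ 0 := by norm_num
  -- push `C` through the cubic relation
  have hvC : (C v)^3 - 3*(C v) + 1 = (0:K[X]) := by
    have h2 : C (v^3 - 3*v + 1) = (0:K[X]) := by rw [hv, map_zero]
    simpa only [map_add, map_sub, map_mul, map_pow, map_one, map_ofNat] using h2
  have hBX : (17:K[X]) * C Bv = -2*(C v)^2 + 6*(C v) + 5 := by
    have h1 : (17:K) * Bv = -2*v^2 + 6*v + 5 := by
      show (17:K) * ((-2*v^2 + 6*v + 5)/17) = _
      field_simp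
    have h2 : C ((17:K) * Bv) = C (-2*v^2 + 6*v + 5 : K) := by rw [h1]
    simpa only [map_mul, map_add, map_sub, map_neg, map_pow, map_ofNat, map_one] using h2
  have hCX : (17:K[X]) * C Cv = -6*(C v)^2 - 8*(C v) + 13 := by
    have h1 : (17:K) * Cv = -6*v^2 - 8*v + 13 := by
      show (17:K) * ((-6*v^2 - 8*v + 13)/17) = _
      field_simp
    have h2 : C ((17:K) * Cv) = C (-6*v^2 - 8*v + 13 : K) := by rw [h1]
    simpa only [map_mul, map_add, map_sub, map_neg, map_pow, map_ofNat, map_one] using h2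
  have hDX : (17:K[X]) * C Dv = 8*(C v)^2 + 2*(C v) - 15 := by
    have h1 : (17:K) * Dv = 8*v^2 + 2*v - 15 := by
      show (17:K) * ((8*v^2 + 2*v - 15)/17) = _
      field_simp
    have h2 : C ((17:K) * Dv) = C (8*v^2 + 2*v - 15 : K) := by rw [h1]
    simpa only [map_mul, map_add, map_sub, map_neg, map_pow, map_ofNat, map_one] using h2
  have key2 : (17:K[X])^3 * N = 17^2 * (-16*(C v)^2 - 16*(C v) + 48) * X^3 := by
    show (17:K[X])^3 *
      (C (-v^2 - v + 3 : K) * (X + 1) * (X - C Bv) * (X - C Cv) * (X - C Dv)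
      - C (-v^2 - v + 3 : K) * (X - 1) * (X - C Bv) * (X - C Cv) * (X - C Dv)
      + C (1 : K) * (X - 1) * (X + 1) * (X - C Cv) * (X - C Dv)
      + C (v^2 - 3 : K) * (X - 1) * (X + 1) * (X - C Bv) * (X - C Dv)
      + C (-v^2 + 2 : K) * (X - 1) * (X + 1) * (X - C Bv) * (X - C Cv)) = _
    have hrA : C (-v^2 - v + 3 : K) = -(C v)^2 - C v + 3 := by
      simp only [map_add, map_sub, map_neg, map_pow, map_ofNat]
    have hrC : C (v^2 - 3 : K) = (C v)^2 - 3 := by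
      simp only [map_sub, map_pow, map_ofNat]
    have hrD : C (-v^2 + 2 : K) = -(C v)^2 + 2 := by
      simp only [map_add, map_neg, map_pow, map_ofNat]
    rw [hrA, hrC, hrD, map_one]
    linear_combination
      (-289*X + -1734*X^2 + 289*X^3 + 867*(C Dv) + 1734*(C Dv)*X + -867*(C Dv)*X^2 + -578*(C Cv) + 1734*(C Cv)*X + 578*(C Cv)*X^2 + -1734*(C Cv)*(C Dv) + 578*(C v)*X^2 + -578*(C v)*(C Dv)*X + -578*(C v)*(C Cv)*X + 578*(C v)*(C Cv)*(C Dv) + 578*(C v)^2*X^2 + -289*(C v)^2*(C Dv) + -578*(C v)^2*(C Dv)*X + 289*(C v)^2*(C Dv)*X^2 + 289*(C v)^2*(C Cv) + -578*(C v)^2*(C Cv)*X + -289*(C v)^2*(C Cv)*X^2 + 578*(C v)^2*(C Cv)*(C Dv)) * hBX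
      + (-170 + 1377*X + -1564*X^2 + -867*X^3 + -799*(C Dv) + 1734*(C Dv)*X + 289*(C Dv)*X^2 + -204*(C v) + 442*(C v)*X + 782*(C v)*X^2 + -442*(C v)*(C Dv) + -578*(C v)*(C Dv)*X + 153*(C v)^2 + -867*(C v)^2*X + 425*(C v)^2*X^2 + 289*(C v)^2*X^3 + 578*(C v)^2*(C Dv) + -578*(C v)^2*(C Dv)*X + 102*(C v)^3 + -136*(C v)^3*X + -102*(C v)^3*X^2 + 136*(C v)^3*(C Dv) + -34*(C v)^4 + 68*(C v)^4*X + 34*(C v)^4*X^2 + -68*(C v)^4*(C Dv)) * hCX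
      + (-356 + 1258*X + -1768*X^2 + 578*X^3 + 344*(C v) + -816*(C v)*X + 136*(C v)*X^2 + 745*(C v)^2 + -1071*(C v)^2*X + 663*(C v)^2*X^2 + -289*(C v)^2*X^3 + -114*(C v)^3 + 340*(C v)^3*X + 102*(C v)^3*X^2 + -286*(C v)^4 + 272*(C v)^4*X + -34*(C v)^4*X^2 + -16*(C v)^5 + 24*(C v)^6) * hDX
      + (3130 + -2414*X + -2482*X^2 + -2890*X^3 + 2226*(C v) + 510*(C v)*X + 2142*(C v)*X^2 + -4046*(C v)*X^3 + -2016*(C v)^2 + 3536*(C v)^2*X + 1088*(C v)^2*X^2 + -1900*(C v)^3 + 1768*(C v)^3*X + -476*(C v)^3*X^2 + -80*(C v)^4 + 192*(C v)^5) * hvC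
  have hc : ((48:K) - 16*v - 16*v^2)/17 ≠ 0 := by
    intro h
    have h1 : (1:K) = 0 := by
      linear_combination (-1 - v/3)*hv + (17*((1:K)/24 - v/24 - v^2/48))*h
    exact one_ne_zero h1
  have h17X : (17:K[X]) ≠ 0 := by
    intro h
    exact h17 (by simpa using congrArg (Polynomial.eval 0) h)
  have key : N = C (((48:K) - 16*v - 16*v^2)/17) * X^3 := by
    apply mul_left_cancel₀ (pow_ne_zero 3 h17X)
    rw [key2]
    have hK : (17:K)^3 * (((48:K) - 16*v - 16*v^2)/17) = 17^2 * (-16*v^2 - 16*v + 48) := by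
      field_simp
      ring
    have h2 : C ((17:K)^3 * (((48:K) - 16*v - 16*v^2)/17))
        = C ((17:K)^2 * (-16*v^2 - 16*v + 48)) := by rw [hK]
    have h3 : (17:K[X])^3 * C (((48:K) - 16*v - 16*v^2)/17)
        = 17^2 * (-16*(C v)^2 - 16*(C v) + 48) := by
      simpa only [map_mul, map_add, map_sub, map_neg, map_pow, map_ofNat] using h2
    linear_combination (-(X^3)) * h3
  have hNne : N ≠ 0 := by
    rw [key]
    exact mul_ne_zero (C_ne_zero.mpr hc) (pow_ne_zero _ X_ne_zero)
  refine ⟨⟨C (((48:K) - 16*v - 16*v^2)/17), by rw [key]; ring⟩, hNne, ?_, ?_, ?_, ?_⟩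
  · intro hd
    have hle := Polynomial.natDegree_le_of_dvd hd hNne
    rw [key, natDegree_X_pow, natDegree_C_mul hc, natDegree_X_pow] at hle
    omega
  · show ((-2*v^2 + 6*v + 5)/17 : K) ≠ 0
    intro h
    have h1 : (1:K) = 0 := by
      linear_combination ((16:K)/51 - 4/51*v)*hv + (17*((7:K)/51 + 2/51*v - 2/51*v^2))*h
    exact one_ne_zero h1
  · show ((-6*v^2 - 8*v + 13)/17 : K) ≠ 0
    intro h
    have h1 : (1:K) = 0 := by
      linear_combination (-(40:K)/51 - 4/17*v)*hv + (17*((7:K)/51 - 4/51*v - 2/51*v^2))*h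
    exact one_ne_zero h1
  · show ((8*v^2 + 2*v - 15)/17 : K) ≠ 0
    intro h
    have h1 : (1:K) = 0 := by
      linear_combination (-(8:K)/17 - 32/51*v)*hv + (17*(-(5:K)/51 + 2/51*v + 4/51*v^2))*h
    exact one_ne_zero h1
end
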